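/- arXiv:1703.06379 — 4 statements merged into one kernel-verified Lean document; each statement's English description precedes it below -/
import Mathlib

section
/- Let L : ℝ^p → ℝ be twice continuously differentiable and let q_λ : ℝ → ℝ be differentiable and even with q_λ(0) = 0 and, for all t < t', −ζ₋ ≤ (q'_λ(t') − q'_λ(t))/(t'−t) ≤ −ζ₊ ≤ 0 for constants ζ₋, ζ₊ ≥ 0. Set L̃_λ(γ) = L(γ) + Σ_{j=1}^p q_λ(γ_j). Suppose γ̂ and γ̂_O in ℝ^p satisfy the stationarity conditions ∇L̃_λ(γ̂) + λ·ξ̂ = 0 and ∇L̃_λ(γ̂_O) + λ·ξ_O = 0 for some ξ̂ ∈ ∂‖γ̂‖₁ and ξ_O ∈ ∂‖γ̂_O‖₁, with λ > 0. Suppose ‖γ̂ − γ̂_O‖₀ ≤ 2s* and that there is ρ₋ > ζ₋ such that vᵀ∇²L(γ)·v ≥ ρ₋·‖v‖₂² for every v ∈ ℝ^p with ‖v‖₀ ≤ 2s* and every γ on the line segment joining γ̂ and γ̂_O. Then γ̂ = γ̂_O. -/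
open MeasureTheory ProbabilityTheory Real BigOperators Finset
open scoped ENNReal Classical

noncomputable section

def dotp {p : ℕ} (v w : Fin p → ℝ) : ℝ := ∑ k, v k * w k

def suppSet {p : ℕ} (v : Fin p → ℝ) : Finset (Fin p) :=
  Finset.univ.filter (fun k => v k ≠ 0)

def l0norm {p : ℕ} (v : Fin p → ℝ) : ℕ := (suppSet v).card

def l1norm {p : ℕ} (v : Fin p → ℝ) : ℝ := ∑ k, |v k|

def l2sq {p : ℕ} (v : Fin p → ℝ) : ℝ := ∑ k, (v k) ^ 2

def linf {p : ℕ} (v : Fin p → ℝ) : ℝ := ⨆ k, |v k|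

/-- `ψ'(t) = eᵗ/(1+eᵗ)`, the logistic function. -/
def psiD (t : ℝ) : ℝ := Real.exp t / (1 + Real.exp t)

/-- `ψ''(t) = eᵗ/(1+eᵗ)²`. -/
def psiD2 (t : ℝ) : ℝ := Real.exp t / (1 + Real.exp t) ^ 2

/-- The pairwise pseudo log-likelihood. -/
def pairLoss {n p : ℕ} (Y : Fin n → ℝ) (X : Fin n → Fin p → ℝ) (γ : Fin p → ℝ) : ℝ :=
  (2 / ((n : ℝ) * ((n : ℝ) - 1))) *
    ∑ i : Fin n, ∑ j : Fin n,
      if i < j then Real.log (1 + Real.exp (-((Y i - Y j) * dotp (fun k => X i k - X j k) γ))) else 0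

/-- Gradient of the pairwise pseudo log-likelihood. -/
def pairGrad {n p : ℕ} (Y : Fin n → ℝ) (X : Fin n → Fin p → ℝ) (γ : Fin p → ℝ) : Fin p → ℝ :=
  fun a => (2 / ((n : ℝ) * ((n : ℝ) - 1))) *
    ∑ i : Fin n, ∑ j : Fin n,
      if i < j then
        (psiD ((Y i - Y j) * dotp (fun k => X i k - X j k) γ) - 1) * (Y i - Y j) * (X i a - X j a)
      else 0

/-- Hessian of the pairwise pseudo log-likelihood. -/
def pairHess {n p : ℕ} (Y : Fin n → ℝ) (X : Fin n → Fin p → ℝ) (γ : Fin p → ℝ) :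
    Matrix (Fin p) (Fin p) ℝ :=
  Matrix.of fun a b => (2 / ((n : ℝ) * ((n : ℝ) - 1))) *
    ∑ i : Fin n, ∑ j : Fin n,
      if i < j then
        psiD2 ((Y i - Y j) * dotp (fun k => X i k - X j k) γ) * (Y i - Y j) ^ 2 *
          (X i a - X j a) * (X i b - X j b)
      else 0

/-- Smallest `s`-sparse eigenvalue. -/
def rhoMinus {p : ℕ} (M : Matrix (Fin p) (Fin p) ℝ) (s : ℕ) : ℝ :=
  sInf {r | ∃ v : Fin p → ℝ, l0norm v ≤ s ∧ l2sq v = 1 ∧ r = dotp v (M.mulVec v)}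

/-- Largest `s`-sparse eigenvalue. -/
def rhoPlus {p : ℕ} (M : Matrix (Fin p) (Fin p) ℝ) (s : ℕ) : ℝ :=
  sSup {r | ∃ v : Fin p → ℝ, l0norm v ≤ s ∧ l2sq v = 1 ∧ r = dotp v (M.mulVec v)}

/-- Matrix `L∞` operator norm: maximal absolute row sum. -/
def matLinf {ι : Type*} [Fintype ι] (A : Matrix ι ι ℝ) : ℝ := ⨆ i, ∑ j, |A i j|

/-- Elementwise supremum norm of a matrix. -/
def matSup {ι κ : Type*} [Fintype ι] [Fintype κ] (A : Matrix ι κ ℝ) : ℝ := ⨆ i, ⨆ j, |A i j|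

/-- `‖(M_SS)⁻¹‖_{L∞}` : L∞ norm of the inverse of the S×S submatrix. -/
def subInvLinf {p : ℕ} (A : Matrix (Fin p) (Fin p) ℝ) (S : Finset (Fin p)) : ℝ :=
  matLinf ((A.submatrix (fun i : {k : Fin p // k ∈ S} => (i : Fin p))
    (fun j : {k : Fin p // k ∈ S} => (j : Fin p)))⁻¹)

/-- ξ is a subgradient of the ℓ1 norm at γ. -/
def L1Subgrad {p : ℕ} (ξ γ : Fin p → ℝ) : Prop :=
  (∀ j, γ j ≠ 0 → ξ j = Real.sign (γ j)) ∧ (∀ j, γ j = 0 → |ξ j| ≤ 1)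

/-- Sub-exponential conditional tail: `P(|Y| ≥ δ | X) ≤ c1 exp(-c2 δ)` a.s., for all δ > 0. -/
def CondTail {Ω : Type*} [MeasurableSpace Ω] (P : Measure Ω) {p : ℕ}
    (Yv : Ω → ℝ) (Xv : Ω → Fin p → ℝ) (c1 c2 : ℝ) : Prop :=
  ∀ δ : ℝ, 0 < δ →
    ∀ᵐ ω ∂P,
      (P[Set.indicator {ω' | δ ≤ |Yv ω'|} (fun _ => (1 : ℝ)) |
          MeasurableSpace.comap Xv inferInstance]) ω ≤ c1 * Real.exp (-c2 * δ)

/-- Normalizing constant of the exponential tilt model. -/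
def tiltZ {p : ℕ} (μ : Measure ℝ) (g : ℝ → ℝ) (γ : Fin p → ℝ) (x : Fin p → ℝ) : ℝ :=
  ∫ y, g y * Real.exp (y * dotp x γ) ∂μ

/-- Exponential-tilt sampling model: the conditional law of `Y` given `X = x` has density
`y ↦ g(y) exp(y xᵀγ*)/Z(x)` with respect to `μ`. -/
def IsTiltModel {Ω : Type*} [MeasurableSpace Ω] {p : ℕ} (P : Measure Ω)
    (Yv : Ω → ℝ) (Xv : Ω → Fin p → ℝ) (μ : Measure ℝ) (g : ℝ → ℝ) (γs : Fin p → ℝ) : Prop :=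
  Measurable Yv ∧ Measurable Xv ∧ Measurable g ∧ (∀ y, 0 ≤ g y) ∧
  (∀ x : Fin p → ℝ, Integrable (fun y => g y * Real.exp (y * dotp x γs)) μ ∧
    0 < tiltZ μ g γs x) ∧
  Measure.map (fun ω => (Yv ω, Xv ω)) P =
    (Measure.map Xv P).bind (fun x =>
      Measure.map (fun y => (y, x))
        (μ.withDensity fun y => ENNReal.ofReal (g y * Real.exp (y * dotp x γs) / tiltZ μ g γs x)))

/-- Regularity conditions (a)–(d) for the penalty family `pλ(t) = pen λ t`, with
`q_λ(t) = pλ(|t|) − λ|t|` having derivative `qd λ`. -/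
def PenaltyFamily (pen : ℝ → ℝ → ℝ) (qd : ℝ → ℝ → ℝ) (ζm ζp : ℝ) : Prop :=
  (∀ lam t, 0 ≤ t → 0 ≤ pen lam t) ∧
  (∀ lam, pen lam 0 = 0) ∧
  (∀ lam t, HasDerivAt (fun u : ℝ => pen lam |u| - lam * |u|) (qd lam t) t) ∧
  0 ≤ ζp ∧ 0 ≤ ζm ∧
  (∀ lam t t' : ℝ, t < t' →
    -ζm ≤ (qd lam t' - qd lam t) / (t' - t) ∧ (qd lam t' - qd lam t) / (t' - t) ≤ -ζp) ∧
  (∀ lam t, |qd lam t| ≤ lam) ∧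
  (∀ lam, qd lam 0 = 0) ∧
  (∀ lam1 lam2 t, |qd lam1 t - qd lam2 t| ≤ |lam1 - lam2|)

/-- Regularity conditions (e)–(f) for the penalty at a given `λ`:
`p'_λ(t) = q'_λ(t) + λ ≥ c7 λ` on `(0, c8 λ]` and `p'_λ(t) = 0` for `t > ν`. -/
def PenaltyAt (qd : ℝ → ℝ → ℝ) (lam c7 c8 ν : ℝ) : Prop :=
  0 ≤ c7 ∧ c7 ≤ 1 ∧ 0 < c8 ∧
  (∀ t : ℝ, 0 < t → t ≤ c8 * lam → c7 * lam ≤ qd lam t + lam) ∧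
  (∀ t : ℝ, ν < t → qd lam t + lam = 0)


/-
The difference of gradients, paired with `v = γ̂ - γ̂_O`, is computed in two ways. By the mean value
theorem applied to `t ↦ ∇L(γ̂_O + t v)·v` it equals a Hessian quadratic form `vᵀ∇²L(γ)v ≥ ρ₋‖v‖²`
at a point of the segment. By the stationarity conditions it equals
`-Σ_k (q'_λ(γ̂_k) - q'_λ(γ̂_{O,k})) v_k - λ Σ_k (ξ̂_k - ξ_{O,k}) v_k`; the first sum is at most
`ζ₋‖v‖²` by the lower slope bound on `q'_λ`, and the second is nonpositive by monotonicity of the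
subdifferential of `|·|`. Hence `(ρ₋ - ζ₋)‖v‖² ≤ 0`, so `v = 0`.
-/

open Set

lemma ContinuousLinearMap.apply_eq_sum_mul_single {ι : Type*} [Fintype ι] [DecidableEq ι]
    (f : (ι → ℝ) →L[ℝ] ℝ) (v : ι → ℝ) : f v = ∑ k, v k * f (Pi.single k 1) := by
  conv_lhs => rw [pi_eq_sum_univ' v]
  simp only [map_sum, map_smul, smul_eq_mul]

lemma l2sq_nonneg {p : ℕ} (v : Fin p → ℝ) : 0 ≤ l2sq v :=
  Finset.sum_nonneg fun k _ => sq_nonneg (v k)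

lemma eq_zero_of_l2sq_nonpos {p : ℕ} {v : Fin p → ℝ} (h : l2sq v ≤ 0) : v = 0 := by
  have hsum : l2sq v = 0 := le_antisymm h (l2sq_nonneg v)
  ext k
  exact pow_eq_zero_iff two_ne_zero |>.mp <|
    (Finset.sum_eq_zero_iff_of_nonneg fun k _ => sq_nonneg (v k)).mp hsum k (mem_univ k)

namespace L1Subgrad

variable {p : ℕ} {ξ γ ξ' γ' : Fin p → ℝ}

lemma mul_eq_abs (h : L1Subgrad ξ γ) (k : Fin p) : ξ k * γ k = |γ k| := by
  rcases lt_trichotomy (γ k) 0 with hneg | hzero | hpos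
  · rw [h.1 k hneg.ne, Real.sign_of_neg hneg, abs_of_neg hneg]; ring
  · simp [hzero]
  · rw [h.1 k hpos.ne', Real.sign_of_pos hpos, abs_of_pos hpos]; ring

lemma abs_le_one (h : L1Subgrad ξ γ) (k : Fin p) : |ξ k| ≤ 1 := by
  rcases lt_trichotomy (γ k) 0 with hneg | hzero | hpos
  · simp [h.1 k hneg.ne, Real.sign_of_neg hneg]
  · exact h.2 k hzero
  · simp [h.1 k hpos.ne', Real.sign_of_pos hpos]

lemma mul_le_abs (h : L1Subgrad ξ γ) (k : Fin p) (t : ℝ) : ξ k * t ≤ |t| :=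
  calc ξ k * t ≤ |ξ k| * |t| := abs_mul (ξ k) t ▸ le_abs_self _
    _ ≤ |t| := mul_le_of_le_one_left (abs_nonneg t) (h.abs_le_one k)

lemma sub_mul_sub_nonneg (h : L1Subgrad ξ γ) (h' : L1Subgrad ξ' γ') (k : Fin p) :
    0 ≤ (ξ k - ξ' k) * (γ k - γ' k) := by
  have := h.mul_eq_abs k
  have := h'.mul_eq_abs k
  have := h.mul_le_abs k (γ' k)
  have := h'.mul_le_abs k (γ k)
  nlinarith

end L1Subgrad

lemma neg_mul_sq_le_of_slope_ge {f : ℝ → ℝ} {c : ℝ}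
    (hf : ∀ t t' : ℝ, t < t' → -c ≤ (f t' - f t) / (t' - t)) (a b : ℝ) :
    -c * (b - a) ^ 2 ≤ (f b - f a) * (b - a) := by
  have key : ∀ t t', t < t' → -c * (t' - t) ^ 2 ≤ (f t' - f t) * (t' - t) := fun t t' htt' => by
    have hpos : 0 < t' - t := sub_pos.mpr htt'
    rw [sq, ← mul_assoc]
    exact mul_le_mul_of_nonneg_right ((le_div_iff₀ hpos).mp (hf t t' htt')) hpos.le
  rcases lt_trichotomy a b with hab | rfl | hba
  · exact key a b hab
  · simp
  · linarith [key b a hba]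

theorem exists_fderiv_sub_eq_fderiv_fderiv {E : Type*} [NormedAddCommGroup E] [NormedSpace ℝ E]
    {L : E → ℝ} (hL : ContDiff ℝ 2 L) (x v : E) :
    ∃ c ∈ Ioo (0 : ℝ) 1,
      fderiv ℝ L (x + v) v - fderiv ℝ L x v = fderiv ℝ (fderiv ℝ L) (x + c • v) v v := by
  have hL' : Differentiable ℝ (fderiv ℝ L) :=
    (hL.fderiv_right (by norm_num)).differentiable one_ne_zero
  have hderiv : ∀ t : ℝ, HasDerivAt (fun s : ℝ => fderiv ℝ L (x + s • v) v)
      (fderiv ℝ (fderiv ℝ L) (x + t • v) v v) t := fun t => by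
    have hline : HasDerivAt (fun s : ℝ => x + s • v) v t := by
      simpa using ((hasDerivAt_id t).smul_const v).const_add x
    simpa using ((hL' _).hasFDerivAt.comp_hasDerivAt t hline).clm_apply (hasDerivAt_const t v)
  obtain ⟨c, hc, hslope⟩ := exists_hasDerivAt_eq_slope _ _ zero_lt_one
    (fun t _ => (hderiv t).continuousAt.continuousWithinAt) (fun t _ => hderiv t)
  refine ⟨c, hc, ?_⟩
  simpa using hslope.symm

lemma sub_apply_le_of_stationary {p : ℕ} {D D' : (Fin p → ℝ) →L[ℝ] ℝ} {qd : ℝ → ℝ} {ζ lam : ℝ}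
    (hslope : ∀ t t' : ℝ, t < t' → -ζ ≤ (qd t' - qd t) / (t' - t)) (hlam : 0 ≤ lam)
    {γ γ' ξ ξ' : Fin p → ℝ} (hξ : L1Subgrad ξ γ) (hξ' : L1Subgrad ξ' γ')
    (hstat : ∀ k, D (Pi.single k 1) + qd (γ k) + lam * ξ k = 0)
    (hstat' : ∀ k, D' (Pi.single k 1) + qd (γ' k) + lam * ξ' k = 0) :
    D (γ - γ') - D' (γ - γ') ≤ ζ * l2sq (γ - γ') := by
  rw [D.apply_eq_sum_mul_single, D'.apply_eq_sum_mul_single, ← Finset.sum_sub_distrib, l2sq,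
    Finset.mul_sum]
  refine Finset.sum_le_sum fun k _ => ?_
  have hq := neg_mul_sq_le_of_slope_ge hslope (γ' k) (γ k)
  have hsub := mul_nonneg hlam (hξ.sub_mul_sub_nonneg hξ' k)
  have hD : D (Pi.single k 1) = -qd (γ k) - lam * ξ k := by linarith [hstat k]
  have hD' : D' (Pi.single k 1) = -qd (γ' k) - lam * ξ' k := by linarith [hstat' k]
  rw [Pi.sub_apply, hD, hD']
  linarith

theorem stmt_1_general {p : ℕ} (L : (Fin p → ℝ) → ℝ) (hL : ContDiff ℝ 2 L)
    (qd : ℝ → ℝ)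
    (ζm ζp : ℝ)
    (hconc : ∀ t t' : ℝ, t < t' →
      -ζm ≤ (qd t' - qd t) / (t' - t) ∧ (qd t' - qd t) / (t' - t) ≤ -ζp)
    (lam : ℝ) (hlam : 0 < lam)
    (γhat γO ξhat ξO : Fin p → ℝ)
    (hξhat : L1Subgrad ξhat γhat) (hξO : L1Subgrad ξO γO)
    (hstat1 : ∀ k, fderiv ℝ L γhat (Pi.single k 1) + qd (γhat k) + lam * ξhat k = 0)
    (hstat2 : ∀ k, fderiv ℝ L γO (Pi.single k 1) + qd (γO k) + lam * ξO k = 0)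
    (sstar : ℕ) (hsparse : l0norm (fun k => γhat k - γO k) ≤ 2 * sstar)
    (ρm : ℝ) (hρζ : ζm < ρm)
    (hcurv : ∀ v : Fin p → ℝ, l0norm v ≤ 2 * sstar → ∀ t ∈ Set.Icc (0 : ℝ) 1,
      ρm * l2sq v ≤ fderiv ℝ (fderiv ℝ L) (γO + t • (γhat - γO)) v v) :
    γhat = γO := by
  obtain ⟨c, hc, hmean⟩ := exists_fderiv_sub_eq_fderiv_fderiv hL γO (γhat - γO)
  rw [add_sub_cancel] at hmean
  have hlower := hcurv (γhat - γO) hsparse c (Ioo_subset_Icc_self hc)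
  have hupper := sub_apply_le_of_stationary (fun t t' h => (hconc t t' h).1) hlam.le
    hξhat hξO hstat1 hstat2
  have hnonpos : (ρm - ζm) * l2sq (γhat - γO) ≤ 0 := by linarith
  exact sub_eq_zero.mp <| eq_zero_of_l2sq_nonpos <|
    nonpos_of_mul_nonpos_right hnonpos (sub_pos.mpr hρζ)

/-- if `γ̂` and `γ̂_O` both satisfy the stationarity condition
`∇L̃_λ(·) + λξ = 0` for subgradients `ξ` of the ℓ1 norm (with
`L̃_λ(γ) = L(γ) + Σⱼ q_λ(γⱼ)`), `‖γ̂ − γ̂_O‖₀ ≤ 2s*`, and the Hessian of `L` is bounded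
below by `ρ₋ > ζ₋` on `2s*`-sparse directions along the segment joining them, then
`γ̂ = γ̂_O`. -/
theorem stmt_1 {p : ℕ} (L : (Fin p → ℝ) → ℝ) (hL : ContDiff ℝ 2 L)
    (qlam : ℝ → ℝ) (qd : ℝ → ℝ) (hqd : ∀ t, HasDerivAt qlam (qd t) t)
    (hq0 : qlam 0 = 0) (hqeven : ∀ t, qlam (-t) = qlam t)
    (ζm ζp : ℝ) (hζm : 0 ≤ ζm) (hζp : 0 ≤ ζp)
    (hconc : ∀ t t' : ℝ, t < t' →
      -ζm ≤ (qd t' - qd t) / (t' - t) ∧ (qd t' - qd t) / (t' - t) ≤ -ζp)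
    (lam : ℝ) (hlam : 0 < lam)
    (γhat γO ξhat ξO : Fin p → ℝ)
    (hξhat : L1Subgrad ξhat γhat) (hξO : L1Subgrad ξO γO)
    (hstat1 : ∀ k, fderiv ℝ L γhat (Pi.single k 1) + qd (γhat k) + lam * ξhat k = 0)
    (hstat2 : ∀ k, fderiv ℝ L γO (Pi.single k 1) + qd (γO k) + lam * ξO k = 0)
    (sstar : ℕ) (hsparse : l0norm (fun k => γhat k - γO k) ≤ 2 * sstar)
    (ρm : ℝ) (hρζ : ζm < ρm)
    (hcurv : ∀ v : Fin p → ℝ, l0norm v ≤ 2 * sstar → ∀ t ∈ Set.Icc (0 : ℝ) 1,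
      ρm * l2sq v ≤ fderiv ℝ (fderiv ℝ L) (γO + t • (γhat - γO)) v v) :
    γhat = γO :=
  stmt_1_general L hL qd ζm ζp hconc lam hlam γhat γO ξhat ξO hξhat hξO hstat1 hstat2 sstar hsparse
    ρm hρζ hcurv
end
end

section
/- (Restricted strong convexity.) Let L : ℝ^p → ℝ be twice continuously differentiable and let q_λ : ℝ → ℝ be differentiable and even with q_λ(0) = 0 and, for all t < t', −ζ₋ ≤ (q'_λ(t') − q'_λ(t))/(t'−t) ≤ −ζ₊ ≤ 0 for constants ζ₋, ζ₊ ≥ 0. Set L̃_λ(γ) = L(γ) + Σ_{j=1}^p q_λ(γ_j). Let S ⊆ {1,…,p} with |S| = s*, and let γ₁, γ₂ ∈ ℝ^p satisfy ‖(γ₁−γ₂)_{S̄}‖₀ ≤ s*, where S̄ is the complement of S. Suppose ρ₋ ≥ 0 satisfies vᵀ∇²L(γ)·v ≥ ρ₋·‖v‖₂² for every v ∈ ℝ^p with ‖v‖₀ ≤ 2s* and every γ on the segment joining γ₁ and γ₂. Then L̃_λ(γ₂) ≥ L̃_λ(γ₁) + ∇L̃_λ(γ₁)ᵀ(γ₂−γ₁)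 + ((ρ₋ − ζ₋)/2)·‖γ₂−γ₁‖₂². -/
open MeasureTheory ProbabilityTheory Real BigOperators Finset
open scoped ENNReal Classical

noncomputable section

/-! Along the segment `t ↦ γ₁ + t • (γ₂ - γ₁)` the direction `γ₂ - γ₁` is supported in `S` plus at
most `s*` coordinates outside `S`, so it is `2s*`-sparse and the Hessian hypothesis bounds the second
derivative of `t ↦ L (γ₁ + t • (γ₂ - γ₁))` below by `ρ₋ ‖γ₂ - γ₁‖²`: subtracting `ρ₋ ‖γ₂ - γ₁‖² t² / 2`
leaves a convex function of `t ∈ [0, 1]`, whose tangent at `0` gives the bound for `L`. Likewise the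
slope condition on `q'_λ` makes `t ↦ q_λ t + ζ₋ t² / 2` convex, so every coordinate of the penalty
lies above its tangent line up to `ζ₋ (γ₂ⱼ - γ₁ⱼ)² / 2`. -/

theorem ConvexOn.add_mul_sub_le_of_hasDerivAt {S : Set ℝ} {f : ℝ → ℝ} {f' x y : ℝ}
    (hfc : ConvexOn ℝ S f) (hx : x ∈ S) (hy : y ∈ S) (hf : HasDerivAt f f' x) :
    f x + f' * (y - x) ≤ f y := by
  rcases lt_trichotomy x y with hxy | rfl | hyx
  · have := hfc.le_slope_of_hasDerivAt hx hy hxy hf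
    rw [slope_def_field, le_div_iff₀ (sub_pos.2 hxy)] at this
    linarith
  · simp
  · have := hfc.slope_le_of_hasDerivAt hy hx hyx hf
    rw [slope_def_field, div_le_iff₀ (sub_pos.2 hyx)] at this
    linarith

theorem hasDerivAt_half_mul_sq (c t : ℝ) : HasDerivAt (fun t => c / 2 * t ^ 2) (c * t) t :=
  ((hasDerivAt_pow 2 t).const_mul (c / 2)).congr_deriv (by ring)

theorem convexOn_univ_add_half_mul_sq_of_slope_ge {q q' : ℝ → ℝ} {ζ : ℝ}
    (hq : ∀ t, HasDerivAt q (q' t) t)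
    (hslope : ∀ t t' : ℝ, t < t' → -ζ ≤ (q' t' - q' t) / (t' - t)) :
    ConvexOn ℝ Set.univ (fun t => q t + ζ / 2 * t ^ 2) := by
  have hderiv : ∀ t, HasDerivAt (fun t => q t + ζ / 2 * t ^ 2) (q' t + ζ * t) t := fun t =>
    (hq t).add (hasDerivAt_half_mul_sq ζ t)
  refine Monotone.convexOn_univ_of_deriv (fun t => (hderiv t).differentiableAt) ?_
  rw [show deriv _ = fun t => q' t + ζ * t from funext fun t => (hderiv t).deriv]
  intro t t' htt'
  rcases htt'.eq_or_lt with rfl | hlt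
  · rfl
  · have := hslope t t' hlt
    rw [le_div_iff₀ (sub_pos.2 hlt)] at this
    linarith

theorem add_mul_sub_sub_le_of_slope_ge {q q' : ℝ → ℝ} {ζ : ℝ} (hq : ∀ t, HasDerivAt q (q' t) t)
    (hslope : ∀ t t' : ℝ, t < t' → -ζ ≤ (q' t' - q' t) / (t' - t)) (a b : ℝ) :
    q a + q' a * (b - a) - ζ / 2 * (b - a) ^ 2 ≤ q b := by
  have := (convexOn_univ_add_half_mul_sq_of_slope_ge hq hslope).add_mul_sub_le_of_hasDerivAt
    (Set.mem_univ a) (Set.mem_univ b) ((hq a).add (hasDerivAt_half_mul_sq ζ a))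
  linear_combination this

theorem convexOn_sub_half_mul_sq_of_le_deriv2 {D : Set ℝ} (hD : Convex ℝ D) {f f' f'' : ℝ → ℝ}
    {c : ℝ} (hf : ∀ t, HasDerivAt f (f' t) t) (hf' : ∀ t, HasDerivAt f' (f'' t) t)
    (hc : ∀ t ∈ D, c ≤ f'' t) :
    ConvexOn ℝ D (fun t => f t - c / 2 * t ^ 2) := by
  have hderiv t := (hf t).sub (hasDerivAt_half_mul_sq c t)
  have hderiv2 t := (hf' t).sub (((hasDerivAt_id t).const_mul c).congr_deriv (mul_one c))
  refine convexOn_of_hasDerivWithinAt2_nonneg hD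
    (fun t _ => (hderiv t).continuousAt.continuousWithinAt) (fun t _ => (hderiv t).hasDerivWithinAt)
    (fun t _ => (hderiv2 t).hasDerivWithinAt) fun t ht => ?_
  linarith [hc t (interior_subset ht)]

theorem ContDiff.add_fderiv_add_half_le {E : Type*} [NormedAddCommGroup E] [NormedSpace ℝ E]
    {L : E → ℝ} (hL : ContDiff ℝ 2 L) (x v : E) {c : ℝ}
    (hc : ∀ t ∈ Set.Icc (0 : ℝ) 1, c ≤ fderiv ℝ (fderiv ℝ L) (x + t • v) v v) :
    L x + fderiv ℝ L x v + c / 2 ≤ L (x + v) := by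
  have hL1 : ContDiff ℝ 1 (fderiv ℝ L) := hL.fderiv_right (by norm_num)
  have hline : ∀ t : ℝ, HasDerivAt (fun t : ℝ => x + t • v) v t := fun t => by
    simpa using ((hasDerivAt_id t).smul_const v).const_add x
  have hφ : ∀ t : ℝ, HasDerivAt (fun t => L (x + t • v)) (fderiv ℝ L (x + t • v) v) t :=
    fun t => (hL.differentiable (by norm_num) _).hasFDerivAt.comp_hasDerivAt t (hline t)
  have hφ' : ∀ t : ℝ, HasDerivAt (fun t => fderiv ℝ L (x + t • v) v)
      (fderiv ℝ (fderiv ℝ L) (x + t • v) v v) t := by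
    intro t
    have hDL := (hL1.differentiable one_ne_zero (x + t • v)).hasFDerivAt.comp_hasDerivAt t (hline t)
    simpa only [map_zero, add_zero, Function.comp_def] using
      hDL.clm_apply (hasDerivAt_const t v)
  have hconvex := convexOn_sub_half_mul_sq_of_le_deriv2 (convex_Icc 0 1) hφ hφ' hc
  have := hconvex.add_mul_sub_le_of_hasDerivAt (Set.left_mem_Icc.2 zero_le_one)
    (Set.right_mem_Icc.2 zero_le_one) ((hφ 0).sub (hasDerivAt_half_mul_sq c 0))
  simp only [zero_smul, add_zero, one_smul] at this
  linarith

theorem l0norm_le_card_add_card_filter_not_mem {p : ℕ} (v : Fin p → ℝ) (S : Finset (Fin p)) :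
    l0norm v ≤ S.card + (Finset.univ.filter (fun k => k ∉ S ∧ v k ≠ 0)).card := by
  refine (Finset.card_le_card fun k hk => ?_).trans (Finset.card_union_le _ _)
  by_cases hkS : k ∈ S
  · exact Finset.mem_union_left _ hkS
  · simp_all [suppSet]

theorem stmt_3_general {p : ℕ} (L : (Fin p → ℝ) → ℝ) (hL : ContDiff ℝ 2 L)
    (qlam : ℝ → ℝ) (qd : ℝ → ℝ) (hqd : ∀ t, HasDerivAt qlam (qd t) t)
    (ζm ζp : ℝ)
    (hconc : ∀ t t' : ℝ, t < t' →
      -ζm ≤ (qd t' - qd t) / (t' - t) ∧ (qd t' - qd t) / (t' - t) ≤ -ζp)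
    (S : Finset (Fin p)) (sstar : ℕ) (hS : S.card = sstar)
    (γ₁ γ₂ : Fin p → ℝ)
    (hsparse : (Finset.univ.filter (fun k => k ∉ S ∧ γ₁ k - γ₂ k ≠ 0)).card ≤ sstar)
    (ρm : ℝ)
    (hRSC : ∀ v : Fin p → ℝ, l0norm v ≤ 2 * sstar → ∀ t ∈ Set.Icc (0 : ℝ) 1,
      ρm * l2sq v ≤ fderiv ℝ (fderiv ℝ L) (γ₁ + t • (γ₂ - γ₁)) v v) :
    L γ₁ + (∑ j, qlam (γ₁ j))
        + (fderiv ℝ L γ₁ (γ₂ - γ₁) + ∑ j, qd (γ₁ j) * (γ₂ j - γ₁ j))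
        + (ρm - ζm) / 2 * l2sq (fun k => γ₂ k - γ₁ k)
      ≤ L γ₂ + ∑ j, qlam (γ₂ j) := by
  have hl0 : l0norm (γ₂ - γ₁) ≤ 2 * sstar := by
    have := l0norm_le_card_add_card_filter_not_mem (γ₂ - γ₁) S
    simp only [Pi.sub_apply, sub_ne_zero, ne_comm (a := γ₂ _)] at this
    simp only [sub_ne_zero] at hsparse
    omega
  have hloss := hL.add_fderiv_add_half_le γ₁ (γ₂ - γ₁) (hRSC _ hl0)
  rw [add_sub_cancel] at hloss
  have hpen := Finset.sum_le_sum fun j (_ : j ∈ Finset.univ) =>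
    add_mul_sub_sub_le_of_slope_ge hqd (fun t t' h => (hconc t t' h).1) (γ₁ j) (γ₂ j)
  simp only [Finset.sum_sub_distrib, Finset.sum_add_distrib, ← Finset.mul_sum] at hpen
  simp only [l2sq, Pi.sub_apply] at hloss ⊢
  linarith

/-- restricted strong convexity: with `L̃_λ(γ) = L(γ) + Σⱼ q_λ(γⱼ)`, if the
Hessian quadratic form of `L` is bounded below by `ρ₋` on `2s*`-sparse directions along the
segment joining `γ₁` and `γ₂`, and `‖(γ₁−γ₂)_{S̄}‖₀ ≤ s*`, then
`L̃_λ(γ₂) ≥ L̃_λ(γ₁) + ∇L̃_λ(γ₁)ᵀ(γ₂−γ₁) + ((ρ₋−ζ₋)/2)‖γ₂−γ₁‖₂²`. -/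
theorem stmt_3 {p : ℕ} (L : (Fin p → ℝ) → ℝ) (hL : ContDiff ℝ 2 L)
    (qlam : ℝ → ℝ) (qd : ℝ → ℝ) (hqd : ∀ t, HasDerivAt qlam (qd t) t)
    (hq0 : qlam 0 = 0) (hqeven : ∀ t, qlam (-t) = qlam t)
    (ζm ζp : ℝ) (hζm : 0 ≤ ζm) (hζp : 0 ≤ ζp)
    (hconc : ∀ t t' : ℝ, t < t' →
      -ζm ≤ (qd t' - qd t) / (t' - t) ∧ (qd t' - qd t) / (t' - t) ≤ -ζp)
    (S : Finset (Fin p)) (sstar : ℕ) (hS : S.card = sstar)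
    (γ₁ γ₂ : Fin p → ℝ)
    (hsparse : (Finset.univ.filter (fun k => k ∉ S ∧ γ₁ k - γ₂ k ≠ 0)).card ≤ sstar)
    (ρm : ℝ) (hρm : 0 ≤ ρm)
    (hRSC : ∀ v : Fin p → ℝ, l0norm v ≤ 2 * sstar → ∀ t ∈ Set.Icc (0 : ℝ) 1,
      ρm * l2sq v ≤ fderiv ℝ (fderiv ℝ L) (γ₁ + t • (γ₂ - γ₁)) v v) :
    L γ₁ + (∑ j, qlam (γ₁ j))
        + (fderiv ℝ L γ₁ (γ₂ - γ₁) + ∑ j, qd (γ₁ j) * (γ₂ j - γ₁ j))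
        + (ρm - ζm) / 2 * l2sq (fun k => γ₂ k - γ₁ k)
      ≤ L γ₂ + ∑ j, qlam (γ₂ j) :=
  stmt_3_general L hL qlam qd hqd ζm ζp hconc S sstar hS γ₁ γ₂ hsparse ρm hRSC
end
end

section
/- (Restricted strong smoothness.) Let L : ℝ^p → ℝ be twice continuously differentiable and let q_λ : ℝ → ℝ be differentiable and even with q_λ(0) = 0 and, for all t < t', −ζ₋ ≤ (q'_λ(t') − q'_λ(t))/(t'−t) ≤ −ζ₊ ≤ 0 for constants ζ₋, ζ₊ ≥ 0. Set L̃_λ(γ) = L(γ) + Σ_{j=1}^p q_λ(γ_j). Let S ⊆ {1,…,p} with |S| = s*, and let γ₁, γ₂ ∈ ℝ^p satisfy ‖(γ₁−γ₂)_{S̄}‖₀ ≤ s*, where S̄ is the complement of S. Suppose ρ₊ ≥ 0 satisfies vᵀ∇²L(γ)·v ≤ ρ₊·‖v‖₂² for every v ∈ ℝ^p with ‖v‖₀ ≤ 2s* and every γ on the segment joining γ₁ and γ₂. Then L̃_λ(γ₂) ≤ L̃_λ(γ₁) + ∇L̃_λ(γ₁)ᵀ(γ₂−γ₁) + ((ρ₊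 − ζ₊)/2)·‖γ₂−γ₁‖₂². -/
open MeasureTheory ProbabilityTheory Real BigOperators Finset
open scoped ENNReal Classical

noncomputable section

/-!
The difference `γ₂ - γ₁` is supported on `S` together with at most `s*` coordinates outside `S`,
so it is `2s*`-sparse and the Hessian bound applies to it along the whole segment; the
second-order Taylor bound then gives the `ρ₊` term for `L`. For the penalty, the slope condition
makes `t ↦ q_λ(t) + ζ₊ t² / 2` concave, so each coordinate lies below its tangent line, which
gives the `-ζ₊` term after summing.
-/

theorem l0norm_sub_comm {p : ℕ} (a b : Fin p → ℝ) : l0norm (a - b) = l0norm (b - a) := by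
  simp only [l0norm, suppSet, Pi.sub_apply, sub_ne_zero, ne_comm]

theorem l0norm_le_card_add_card_filter_notMem {p : ℕ} (v : Fin p → ℝ) (S : Finset (Fin p)) :
    l0norm v ≤ S.card + (univ.filter fun k => k ∉ S ∧ v k ≠ 0).card := by
  refine (card_le_card fun k hk => ?_).trans (card_union_le _ _)
  by_cases hkS : k ∈ S
  · exact mem_union_left _ hkS
  · exact mem_union_right _ (by simpa [suppSet, hkS] using hk)

theorem ConcaveOn.le_add_mul_sub_of_hasDerivAt {S : Set ℝ} {f : ℝ → ℝ} {f' x y : ℝ}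
    (hf : ConcaveOn ℝ S f) (hx : x ∈ S) (hy : y ∈ S) (hf' : HasDerivAt f f' x) :
    f y ≤ f x + f' * (y - x) := by
  rcases lt_trichotomy x y with hxy | rfl | hyx
  · have := hf.slope_le_of_hasDerivAt hx hy hxy hf'
    rw [slope_def_field, div_le_iff₀ (sub_pos.2 hxy)] at this
    linarith
  · simp
  · have := hf.le_slope_of_hasDerivAt hy hx hyx hf'
    rw [slope_def_field, le_div_iff₀ (sub_pos.2 hyx)] at this
    linarith

/-- `g - C x² / 2` is concave, so it lies below its tangent line at `a`. -/
theorem le_add_mul_sub_add_sq_of_antitoneOn {D : Set ℝ} (hD : Convex ℝ D) {g g' : ℝ → ℝ}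
    (hg : ∀ x ∈ D, HasDerivAt g (g' x) x) (C : ℝ) (hanti : AntitoneOn (fun x => g' x - C * x) D)
    {a b : ℝ} (ha : a ∈ D) (hb : b ∈ D) :
    g b ≤ g a + g' a * (b - a) + C / 2 * (b - a) ^ 2 := by
  have hh : ∀ x ∈ D, HasDerivAt (fun x => g x - C / 2 * x ^ 2) (g' x - C * x) x := fun x hx =>
    (hg x hx).sub (((hasDerivAt_pow 2 x).const_mul (C / 2)).congr_deriv (by norm_num; ring))
  have hconc : ConcaveOn ℝ D (fun x => g x - C / 2 * x ^ 2) := by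
    refine AntitoneOn.concaveOn_of_deriv hD
      (fun x hx => (hh x hx).continuousAt.continuousWithinAt)
      (fun x hx => (hh x (interior_subset hx)).differentiableAt.differentiableWithinAt) ?_
    intro x hx y hy hxy
    rw [(hh x (interior_subset hx)).deriv, (hh y (interior_subset hy)).deriv]
    exact hanti (interior_subset hx) (interior_subset hy) hxy
  have := hconc.le_add_mul_sub_of_hasDerivAt ha hb (hh a ha)
  linarith

theorem ContDiff.le_add_fderiv_add_of_fderiv_fderiv_le {E : Type*} [NormedAddCommGroup E]
    [NormedSpace ℝ E] {L : E → ℝ} (hL : ContDiff ℝ 2 L) (x v : E) (C : ℝ)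
    (hC : ∀ t ∈ Set.Icc (0 : ℝ) 1, fderiv ℝ (fderiv ℝ L) (x + t • v) v v ≤ C) :
    L (x + v) ≤ L x + fderiv ℝ L x v + C / 2 := by
  have hL1 : Differentiable ℝ L := hL.differentiable (by norm_num)
  have hL2 : Differentiable ℝ (fderiv ℝ L) :=
    (hL.fderiv_right (m := 1) (by norm_num)).differentiable (by norm_num)
  have hline : ∀ t : ℝ, HasDerivAt (fun t : ℝ => x + t • v) v t := fun t => by
    simpa using ((hasDerivAt_id t).smul_const v).const_add x
  have hf : ∀ t : ℝ, HasDerivAt (fun t => L (x + t • v)) (fderiv ℝ L (x + t • v) v) t :=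
    fun t => (hL1 _).hasFDerivAt.comp_hasDerivAt t (hline t)
  have hf' : ∀ t : ℝ, HasDerivAt (fun t => fderiv ℝ L (x + t • v) v - C * t)
      (fderiv ℝ (fderiv ℝ L) (x + t • v) v v - C) t := fun t => by
    have := ((hL2 _).hasFDerivAt.comp_hasDerivAt t (hline t)).clm_apply (hasDerivAt_const t v)
    exact (this.sub ((hasDerivAt_id t).const_mul C)).congr_deriv (by simp)
  have hanti : AntitoneOn (fun t => fderiv ℝ L (x + t • v) v - C * t) (Set.Icc 0 1) :=
    antitoneOn_of_hasDerivWithinAt_nonpos (convex_Icc 0 1)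
      (fun t _ => (hf' t).continuousAt.continuousWithinAt) (fun t _ => (hf' t).hasDerivWithinAt)
      (fun t ht => sub_nonpos.2 (hC t (interior_subset ht)))
  simpa using le_add_mul_sub_add_sq_of_antitoneOn (convex_Icc 0 1) (fun t _ => hf t) C hanti
    (Set.left_mem_Icc.2 zero_le_one) (Set.right_mem_Icc.2 zero_le_one)

theorem le_add_mul_sub_add_sq_of_slope_le {q qd : ℝ → ℝ} (hq : ∀ t, HasDerivAt q (qd t) t)
    {C : ℝ} (hslope : ∀ t t' : ℝ, t < t' → (qd t' - qd t) / (t' - t) ≤ C) (a b : ℝ) :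
    q b ≤ q a + qd a * (b - a) + C / 2 * (b - a) ^ 2 := by
  refine le_add_mul_sub_add_sq_of_antitoneOn convex_univ (fun t _ => hq t) C ?_ trivial trivial
  intro t _ t' _ htt'
  rcases htt'.eq_or_lt with rfl | hlt
  · rfl
  · have := hslope t t' hlt
    rw [div_le_iff₀ (sub_pos.2 hlt)] at this
    dsimp only
    linarith

theorem sum_le_add_sum_mul_sub_add_l2sq_of_slope_le {p : ℕ} {q qd : ℝ → ℝ}
    (hq : ∀ t, HasDerivAt q (qd t) t) {C : ℝ}
    (hslope : ∀ t t' : ℝ, t < t' → (qd t' - qd t) / (t' - t) ≤ C) (x y : Fin p → ℝ) :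
    ∑ j, q (y j) ≤ ∑ j, q (x j) + ∑ j, qd (x j) * (y j - x j) + C / 2 * l2sq (y - x) := by
  have := sum_le_sum fun j (_ : j ∈ univ) => le_add_mul_sub_add_sq_of_slope_le hq hslope (x j) (y j)
  simpa only [l2sq, Pi.sub_apply, mul_sum, sum_add_distrib] using this

theorem stmt_4_general {p : ℕ} (L : (Fin p → ℝ) → ℝ) (hL : ContDiff ℝ 2 L)
    (qlam : ℝ → ℝ) (qd : ℝ → ℝ) (hqd : ∀ t, HasDerivAt qlam (qd t) t)
    (ζm ζp : ℝ)
    (hconc : ∀ t t' : ℝ, t < t' →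
      -ζm ≤ (qd t' - qd t) / (t' - t) ∧ (qd t' - qd t) / (t' - t) ≤ -ζp)
    (S : Finset (Fin p)) (sstar : ℕ) (hS : S.card = sstar)
    (γ₁ γ₂ : Fin p → ℝ)
    (hsparse : (Finset.univ.filter (fun k => k ∉ S ∧ γ₁ k - γ₂ k ≠ 0)).card ≤ sstar)
    (ρp : ℝ)
    (hRSS : ∀ v : Fin p → ℝ, l0norm v ≤ 2 * sstar → ∀ t ∈ Set.Icc (0 : ℝ) 1,
      fderiv ℝ (fderiv ℝ L) (γ₁ + t • (γ₂ - γ₁)) v v ≤ ρp * l2sq v) :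
    L γ₂ + ∑ j, qlam (γ₂ j)
      ≤ L γ₁ + (∑ j, qlam (γ₁ j))
        + (fderiv ℝ L γ₁ (γ₂ - γ₁) + ∑ j, qd (γ₁ j) * (γ₂ j - γ₁ j))
        + (ρp - ζp) / 2 * l2sq (fun k => γ₂ k - γ₁ k) := by
  have hl0 : l0norm (γ₂ - γ₁) ≤ 2 * sstar := by
    rw [l0norm_sub_comm]
    have := l0norm_le_card_add_card_filter_notMem (γ₁ - γ₂) S
    simp only [Pi.sub_apply] at this
    omega
  have hLγ := hL.le_add_fderiv_add_of_fderiv_fderiv_le γ₁ (γ₂ - γ₁) _ (hRSS _ hl0)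
  have hqγ := sum_le_add_sum_mul_sub_add_l2sq_of_slope_le hqd (fun t t' h => (hconc t t' h).2) γ₁ γ₂
  rw [add_sub_cancel] at hLγ
  change _ ≤ _ + _ + _ + _ * l2sq (γ₂ - γ₁)
  linarith

/-- restricted strong smoothness: with `L̃_λ(γ) = L(γ) + Σⱼ q_λ(γⱼ)`, if the
Hessian quadratic form of `L` is bounded above by `ρ₊` on `2s*`-sparse directions along the
segment joining `γ₁` and `γ₂`, and `‖(γ₁−γ₂)_{S̄}‖₀ ≤ s*`, then
`L̃_λ(γ₂) ≤ L̃_λ(γ₁) + ∇L̃_λ(γ₁)ᵀ(γ₂−γ₁) + ((ρ₊−ζ₊)/2)‖γ₂−γ₁‖₂²`. -/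
theorem stmt_4 {p : ℕ} (L : (Fin p → ℝ) → ℝ) (hL : ContDiff ℝ 2 L)
    (qlam : ℝ → ℝ) (qd : ℝ → ℝ) (hqd : ∀ t, HasDerivAt qlam (qd t) t)
    (hq0 : qlam 0 = 0) (hqeven : ∀ t, qlam (-t) = qlam t)
    (ζm ζp : ℝ) (hζm : 0 ≤ ζm) (hζp : 0 ≤ ζp)
    (hconc : ∀ t t' : ℝ, t < t' →
      -ζm ≤ (qd t' - qd t) / (t' - t) ∧ (qd t' - qd t) / (t' - t) ≤ -ζp)
    (S : Finset (Fin p)) (sstar : ℕ) (hS : S.card = sstar)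
    (γ₁ γ₂ : Fin p → ℝ)
    (hsparse : (Finset.univ.filter (fun k => k ∉ S ∧ γ₁ k - γ₂ k ≠ 0)).card ≤ sstar)
    (ρp : ℝ) (hρp : 0 ≤ ρp)
    (hRSS : ∀ v : Fin p → ℝ, l0norm v ≤ 2 * sstar → ∀ t ∈ Set.Icc (0 : ℝ) 1,
      fderiv ℝ (fderiv ℝ L) (γ₁ + t • (γ₂ - γ₁)) v v ≤ ρp * l2sq v) :
    L γ₂ + ∑ j, qlam (γ₂ j)
      ≤ L γ₁ + (∑ j, qlam (γ₁ j))
        + (fderiv ℝ L γ₁ (γ₂ - γ₁) + ∑ j, qd (γ₁ j) * (γ₂ j - γ₁ j))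
        + (ρp - ζp) / 2 * l2sq (fun k => γ₂ k - γ₁ k) :=
  stmt_4_general L hL qlam qd hqd ζm ζp hconc S sstar hS γ₁ γ₂ hsparse ρp hRSS
end
end

section
/- Under the exponential-tilt sampling model: if (Y₁,X₁) and (Y₂,X₂) are i.i.d. pairs whose conditional law of Y given X = x has density y ↦ g(y)·exp(y·xᵀγ*)/Z(x) with respect to a σ-finite measure μ, and if E[|Y₁−Y₂|·‖X₁−X₂‖₁] < ∞, then E[(ψ'((Y₁−Y₂)·(X₁−X₂)ᵀγ*) − 1)·(Y₁−Y₂)·(X₁−X₂)] = 0 componentwise; that is, the expected gradient of the pairwise pseudo log-likelihood at the true parameter γ* is zero. -/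
open MeasureTheory ProbabilityTheory Real BigOperators Finset
open scoped ENNReal Classical

noncomputable section

/-!
Condition on `X₁ = x₁, X₂ = x₂` and write `cᵢ = xᵢᵀγ*`. The conditional density of `(Y₁, Y₂)`
is proportional to `g(y₁) g(y₂) exp(y₁c₁ + y₂c₂)`, and swapping `y₁, y₂` multiplies it by `exp(-t)`
with `t = (y₁ - y₂)(c₁ - c₂)`. Since `(ψ'(-t) - 1) e⁻ᵗ = ψ'(t) - 1`, the integrand times the
density changes sign under the swap, so every conditional expectation vanishes; integrating over
`(X₁, X₂)` is legitimate because `|ψ' - 1| ≤ 1` makes the integrand dominated by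
`|Y₁ - Y₂| ‖X₁ - X₂‖₁`.
-/

lemma psiD_neg_sub_one_mul_exp_neg (t : ℝ) : (psiD (-t) - 1) * Real.exp (-t) = psiD t - 1 := by
  have h : Real.exp (-t) * Real.exp t = 1 := by rw [← Real.exp_add]; simp
  unfold psiD
  field_simp
  linear_combination -h

lemma abs_psiD_sub_one_le (t : ℝ) : |psiD t - 1| ≤ 1 := by
  have h0 : 0 ≤ psiD t := by unfold psiD; positivity
  have h1 : psiD t ≤ 1 := by
    rw [psiD, div_le_one (by positivity)]; linarith
  rw [abs_le]; constructor <;> linarith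

lemma continuous_psiD : Continuous psiD :=
  Real.continuous_exp.div (continuous_const.add Real.continuous_exp) fun _ => by positivity

lemma dotp_sub {p : ℕ} (x₁ x₂ γ : Fin p → ℝ) :
    dotp (fun k => x₁ k - x₂ k) γ = dotp x₁ γ - dotp x₂ γ := by
  simp only [dotp, sub_mul, Finset.sum_sub_distrib]

lemma measurable_dotp {p : ℕ} (γ : Fin p → ℝ) : Measurable fun x : Fin p → ℝ => dotp x γ := by
  unfold dotp; fun_prop

lemma abs_le_l1norm {p : ℕ} (v : Fin p → ℝ) (a : Fin p) : |v a| ≤ l1norm v :=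
  Finset.single_le_sum (f := fun k => |v k|) (fun _ _ => abs_nonneg _) (Finset.mem_univ a)

lemma integral_prod_eq_zero_of_swap_eq_neg {α : Type*} [MeasurableSpace α] {μ : Measure α}
    [SFinite μ] {f : α × α → ℝ} (hf : ∀ z, f z.swap = -f z) : ∫ z, f z ∂(μ.prod μ) = 0 := by
  have h := integral_prod_swap (μ := μ) (ν := μ) f
  simp only [hf, integral_neg] at h
  linarith

namespace MeasureTheory.Measure

variable {α β γ δ : Type*} [MeasurableSpace α] [MeasurableSpace β] [MeasurableSpace γ]
  [MeasurableSpace δ]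

lemma integral_comp {μ : Measure α} {κ : Kernel α β} {f : β → ℝ} (hf : Integrable f (κ ∘ₘ μ)) :
    ∫ y, f y ∂(κ ∘ₘ μ) = ∫ x, ∫ y, f y ∂κ x ∂μ := by
  rw [comp_eq_comp_const_apply] at hf ⊢
  rw [Kernel.integral_comp hf, Kernel.const_apply]

lemma comp_prod_comp {μ : Measure α} {ν : Measure γ} [SFinite μ] [SFinite ν]
    {κ : Kernel α β} {η : Kernel γ δ} [IsSFiniteKernel κ] [IsSFiniteKernel η] :
    (κ ∘ₘ μ).prod (η ∘ₘ ν) = (κ ∥ₖ η) ∘ₘ (μ.prod ν) := by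
  rw [prod_comp_left, prod_comp_right, comp_assoc, Kernel.parallelComp_comp_parallelComp,
    Kernel.comp_id, Kernel.id_comp]

end MeasureTheory.Measure

-- The `a`-th coordinate of the summand of `pairGrad` belonging to one pair of observations.
def pairScore {p : ℕ} (γ : Fin p → ℝ) (a : Fin p)
    (u : (ℝ × (Fin p → ℝ)) × (ℝ × (Fin p → ℝ))) : ℝ :=
  (psiD ((u.1.1 - u.2.1) * dotp (fun k => u.1.2 k - u.2.2 k) γ) - 1) *
    (u.1.1 - u.2.1) * (u.1.2 a - u.2.2 a)

lemma measurable_pairScore {p : ℕ} (γ : Fin p → ℝ) (a : Fin p) : Measurable (pairScore γ a) := by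
  have := continuous_psiD.measurable
  unfold pairScore dotp
  fun_prop

lemma abs_pairScore_le {p : ℕ} (γ : Fin p → ℝ) (a : Fin p)
    (u : (ℝ × (Fin p → ℝ)) × (ℝ × (Fin p → ℝ))) :
    |pairScore γ a u| ≤ |u.1.1 - u.2.1| * l1norm (fun k => u.1.2 k - u.2.2 k) := by
  rw [pairScore, abs_mul, abs_mul]
  calc _ ≤ 1 * |u.1.1 - u.2.1| * l1norm (fun k => u.1.2 k - u.2.2 k) := by
        gcongr
        · exact abs_psiD_sub_one_le _
        · exact abs_le_l1norm (fun k => u.1.2 k - u.2.2 k) a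
    _ = _ := by ring

lemma integrable_pairScore {Ω : Type*} [MeasurableSpace Ω] {P : Measure Ω} {p : ℕ}
    {Y₁ Y₂ : Ω → ℝ} {X₁ X₂ : Ω → Fin p → ℝ}
    (hmeas : Measurable fun ω => ((Y₁ ω, X₁ ω), (Y₂ ω, X₂ ω)))
    (hint : Integrable (fun ω => |Y₁ ω - Y₂ ω| * l1norm (fun k => X₁ ω k - X₂ ω k)) P)
    (γ : Fin p → ℝ) (a : Fin p) :
    Integrable (fun ω => pairScore γ a ((Y₁ ω, X₁ ω), (Y₂ ω, X₂ ω))) P := by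
  refine hint.mono ((measurable_pairScore γ a).comp hmeas).aestronglyMeasurable
    (ae_of_all _ fun ω => ?_)
  rw [Real.norm_eq_abs, Real.norm_eq_abs]
  exact (abs_pairScore_le γ a _).trans (le_abs_self _)

def tiltDensity {p : ℕ} (μ : Measure ℝ) (g : ℝ → ℝ) (γ x : Fin p → ℝ) (y : ℝ) : ℝ :=
  g y * Real.exp (y * dotp x γ) / tiltZ μ g γ x

def tiltKernel {p : ℕ} (μ : Measure ℝ) [SFinite μ] (g : ℝ → ℝ) (γ : Fin p → ℝ) :
    Kernel (Fin p → ℝ) ℝ :=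
  Kernel.withDensity (Kernel.const _ μ) fun x y => ENNReal.ofReal (tiltDensity μ g γ x y)

section TiltKernel

variable {p : ℕ} {μ : Measure ℝ} {g : ℝ → ℝ} {γ : Fin p → ℝ}

lemma measurable_tiltZ [SFinite μ] (hg : Measurable g) : Measurable (tiltZ μ g γ) := by
  have := measurable_dotp γ
  have hm : StronglyMeasurable fun q : (Fin p → ℝ) × ℝ => g q.2 * Real.exp (q.2 * dotp q.1 γ) :=
    Measurable.stronglyMeasurable (by fun_prop)
  exact hm.integral_prod_right'.measurable

lemma measurable_tiltDensity [SFinite μ] (hg : Measurable g) :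
    Measurable (Function.uncurry (tiltDensity μ g γ)) := by
  have := measurable_dotp γ
  have := measurable_tiltZ (μ := μ) (γ := γ) hg
  unfold tiltDensity
  fun_prop

lemma tiltDensity_nonneg (hg₀ : ∀ y, 0 ≤ g y) {x : Fin p → ℝ} (hZ : 0 < tiltZ μ g γ x) (y : ℝ) :
    0 ≤ tiltDensity μ g γ x y :=
  div_nonneg (mul_nonneg (hg₀ y) (Real.exp_pos _).le) hZ.le

instance [SFinite μ] : IsSFiniteKernel (tiltKernel μ g γ) :=
  Kernel.IsSFiniteKernel.withDensity _ fun _ _ => ENNReal.ofReal_ne_top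

lemma tiltKernel_apply [SFinite μ] (hg : Measurable g) (x : Fin p → ℝ) :
    tiltKernel μ g γ x = μ.withDensity fun y => ENNReal.ofReal (tiltDensity μ g γ x y) := by
  have hm : Measurable (Function.uncurry fun x y => ENNReal.ofReal (tiltDensity μ g γ x y)) :=
    ENNReal.measurable_ofReal.comp (measurable_tiltDensity hg)
  rw [tiltKernel, Kernel.withDensity_apply _ hm, Kernel.const_apply]

lemma IsTiltModel.map_eq_comp {Ω : Type*} [MeasurableSpace Ω] {P : Measure Ω} [SFinite μ]
    {Y : Ω → ℝ} {X : Ω → Fin p → ℝ} (h : IsTiltModel P Y X μ g γ) :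
    P.map (fun ω => (Y ω, X ω)) = (tiltKernel μ g γ ×ₖ Kernel.id) ∘ₘ P.map X := by
  rw [h.2.2.2.2.2]
  congr 1
  funext x
  rw [Kernel.prod_apply, Kernel.id_apply, Measure.prod_dirac, tiltKernel_apply h.2.2.1]
  rfl

lemma tiltDensity_mul_pairScore_swap (a : Fin p) (x₁ x₂ : Fin p → ℝ) (y₁ y₂ : ℝ) :
    tiltDensity μ g γ x₁ y₂ * tiltDensity μ g γ x₂ y₁ * pairScore γ a ((y₂, x₁), (y₁, x₂)) =
      -(tiltDensity μ g γ x₁ y₁ * tiltDensity μ g γ x₂ y₂ *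
        pairScore γ a ((y₁, x₁), (y₂, x₂))) := by
  have hexp : Real.exp (y₂ * dotp x₁ γ) * Real.exp (y₁ * dotp x₂ γ) =
      Real.exp (y₁ * dotp x₁ γ) * Real.exp (y₂ * dotp x₂ γ) *
        Real.exp (-((y₁ - y₂) * (dotp x₁ γ - dotp x₂ γ))) := by
    simp only [← Real.exp_add]; ring_nf
  have hneg : (y₂ - y₁) * (dotp x₁ γ - dotp x₂ γ) = -((y₁ - y₂) * (dotp x₁ γ - dotp x₂ γ)) := by
    ring
  have hpsi := psiD_neg_sub_one_mul_exp_neg ((y₁ - y₂) * (dotp x₁ γ - dotp x₂ γ))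
  simp only [tiltDensity, pairScore, dotp_sub, hneg, div_eq_mul_inv]
  linear_combination (tiltZ μ g γ x₁)⁻¹ * (tiltZ μ g γ x₂)⁻¹ * g y₁ * g y₂ * (y₂ - y₁) *
    (x₁ a - x₂ a) * ((psiD (-((y₁ - y₂) * (dotp x₁ γ - dotp x₂ γ))) - 1) * hexp +
      Real.exp (y₁ * dotp x₁ γ) * Real.exp (y₂ * dotp x₂ γ) * hpsi)

lemma integral_pairScore_tiltKernel_prod_id [SFinite μ] (hg : Measurable g)
    (hg₀ : ∀ y, 0 ≤ g y) (hZ : ∀ x, 0 < tiltZ μ g γ x) (a : Fin p)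
    (x : (Fin p → ℝ) × (Fin p → ℝ)) :
    ∫ u, pairScore γ a u
      ∂((tiltKernel μ g γ ×ₖ Kernel.id) ∥ₖ (tiltKernel μ g γ ×ₖ Kernel.id)) x = 0 := by
  obtain ⟨x₁, x₂⟩ := x
  have hr : ∀ x, Measurable fun y => ENNReal.ofReal (tiltDensity μ g γ x y) := fun x =>
    ENNReal.measurable_ofReal.comp ((measurable_tiltDensity hg).comp measurable_prodMk_left)
  have hr₁₂ : Measurable fun z : ℝ × ℝ =>
      ENNReal.ofReal (tiltDensity μ g γ x₁ z.1) * ENNReal.ofReal (tiltDensity μ g γ x₂ z.2) :=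
    ((hr x₁).comp measurable_fst).mul ((hr x₂).comp measurable_snd)
  rw [Kernel.parallelComp_apply, Kernel.prod_apply, Kernel.prod_apply, Kernel.id_apply,
    Kernel.id_apply, Measure.prod_dirac, Measure.prod_dirac,
    Measure.map_prod_map _ _ measurable_prodMk_right measurable_prodMk_right,
    integral_map (by fun_prop) (measurable_pairScore γ a).aestronglyMeasurable,
    tiltKernel_apply hg, tiltKernel_apply hg, prod_withDensity (hr x₁) (hr x₂),
    integral_withDensity_eq_integral_toReal_smul hr₁₂
      (ae_of_all _ fun _ => ENNReal.mul_lt_top ENNReal.ofReal_lt_top ENNReal.ofReal_lt_top)]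
  refine integral_prod_eq_zero_of_swap_eq_neg fun z => ?_
  simp only [Prod.fst_swap, Prod.snd_swap, Prod.map, ENNReal.toReal_mul, smul_eq_mul,
    ENNReal.toReal_ofReal (tiltDensity_nonneg hg₀ (hZ _) _)]
  exact tiltDensity_mul_pairScore_swap a x₁ x₂ z.1 z.2

end TiltKernel

/-- under the exponential-tilt sampling model, for i.i.d. pairs
`(Y₁,X₁), (Y₂,X₂)` with `E[|Y₁−Y₂|·‖X₁−X₂‖₁] < ∞`, the expected gradient of the pairwise
pseudo log-likelihood at the true parameter vanishes:
`E[(ψ'((Y₁−Y₂)(X₁−X₂)ᵀγ*) − 1)(Y₁−Y₂)(X₁−X₂)] = 0` componentwise. -/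
theorem stmt_8 {Ω : Type*} [MeasurableSpace Ω] (P : Measure Ω) [IsProbabilityMeasure P]
    {p : ℕ} (Y₁ Y₂ : Ω → ℝ) (X₁ X₂ : Ω → Fin p → ℝ)
    (μ : Measure ℝ) [SigmaFinite μ] (g : ℝ → ℝ) (γs : Fin p → ℝ)
    (hm1 : IsTiltModel P Y₁ X₁ μ g γs) (hm2 : IsTiltModel P Y₂ X₂ μ g γs)
    (hident : Measure.map (fun ω => (Y₁ ω, X₁ ω)) P = Measure.map (fun ω => (Y₂ ω, X₂ ω)) P)
    (hind : IndepFun (fun ω => (Y₁ ω, X₁ ω)) (fun ω => (Y₂ ω, X₂ ω)) P)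
    (hint : Integrable (fun ω => |Y₁ ω - Y₂ ω| * l1norm (fun k => X₁ ω k - X₂ ω k)) P) :
    ∀ a : Fin p,
      ∫ ω, (psiD ((Y₁ ω - Y₂ ω) * dotp (fun k => X₁ ω k - X₂ ω k) γs) - 1) *
          (Y₁ ω - Y₂ ω) * (X₁ ω a - X₂ ω a) ∂P = 0 := by
  intro a
  have hν := hm1.map_eq_comp
  obtain ⟨hY₁, hX₁, hg, hg₀, hZ, -⟩ := hm1
  obtain ⟨hY₂, hX₂, -⟩ := hm2
  set η := tiltKernel μ g γs ×ₖ Kernel.id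
  have hU := hY₁.prodMk hX₁
  have hV := hY₂.prodMk hX₂
  have hlaw : P.map (fun ω => ((Y₁ ω, X₁ ω), (Y₂ ω, X₂ ω))) =
      (η ∥ₖ η) ∘ₘ (P.map X₁).prod (P.map X₁) := by
    rw [(indepFun_iff_map_prod_eq_prod_map_map hU.aemeasurable hV.aemeasurable).mp hind,
      ← hident, hν, Measure.comp_prod_comp]
  have hF : Integrable (pairScore γs a) ((η ∥ₖ η) ∘ₘ (P.map X₁).prod (P.map X₁)) := by
    rw [← hlaw, integrable_map_measure (measurable_pairScore γs a).aestronglyMeasurable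
      (hU.prodMk hV).aemeasurable]
    exact integrable_pairScore (hU.prodMk hV) hint γs a
  calc _ = ∫ u, pairScore γs a u ∂(P.map fun ω => ((Y₁ ω, X₁ ω), (Y₂ ω, X₂ ω))) :=
        (integral_map (hU.prodMk hV).aemeasurable
          (measurable_pairScore γs a).aestronglyMeasurable).symm
    _ = 0 := by
      rw [hlaw, Measure.integral_comp hF]
      simp only [η, integral_pairScore_tiltKernel_prod_id hg hg₀ (fun x => (hZ x).2) a,
        integral_zero]
end
end
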